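/- Let H be a complex Hilbert space and let U be a unitary operator on H such that U + I is Fredholm. Then there exists a smooth path f : [0,1] → B(H) (infinitely differentiable as a map into the Banach space of bounded operators with the norm topology) such that: each f(t) is unitary; f(t) + I is Fredholm for every t ∈ [0,1]; f(0) − I is a finite-rank operator; f(1) = U; and the dimension of ker(f(t) + I) is independent of t ∈ [0,1]. -/

import Mathlib

set_option maxHeartbeats 1000000
set_option synthInstance.maxHeartbeats 200000

private lemma cancel_left {M : Type*} [Monoid M] {a b c : M} (h : IsUnit a)
    (e : a * b = a * c) : b = c := by
  obtain ⟨u, rfl⟩ := h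
  exact (Units.mul_right_inj u).mp e

private lemma cancel_right {M : Type*} [Monoid M] {a b c : M} (h : IsUnit a)
    (e : b * a = c * a) : b = c := by
  obtain ⟨u, rfl⟩ := h
  exact (Units.mul_left_inj u).mp e

private lemma isUnit_smul_real {R : Type*} [Ring R] [Algebra ℝ R] {a : ℝ} (ha : a ≠ 0)
    {x : R} (hx : IsUnit x) : IsUnit (a • x) := by
  rw [Algebra.smul_def]
  exact (((isUnit_iff_ne_zero.2 ha).map (algebraMap ℝ R))).mul hx


/-- A bounded operator between inner product spaces is *Fredholm* if its kernel is
finite-dimensional and its range is closed with finite-dimensional orthogonal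
complement. -/
def IsFredholm {X Y : Type*} [NormedAddCommGroup X] [InnerProductSpace ℂ X]
    [NormedAddCommGroup Y] [InnerProductSpace ℂ Y] (f : X →L[ℂ] Y) : Prop :=
  FiniteDimensional ℂ (LinearMap.ker (f : X →ₗ[ℂ] Y)) ∧
    IsClosed ((LinearMap.range (f : X →ₗ[ℂ] Y) : Submodule ℂ Y) : Set Y) ∧
    FiniteDimensional ℂ ((LinearMap.range (f : X →ₗ[ℂ] Y))ᗮ : Submodule ℂ Y)

/-- For a unitary `U` on a complex Hilbert space with `U + I`
Fredholm, there is a smooth path `f : [0,1] → B(H)` of unitaries with `f t + I`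
Fredholm, `f 0 - I` of finite rank, `f 1 = U`, and `dim ker (f t + I)`
independent of `t`. -/
theorem statement11 {H : Type*} [NormedAddCommGroup H] [InnerProductSpace ℂ H]
    [CompleteSpace H] (U : H →L[ℂ] H) (hU : U ∈ unitary (H →L[ℂ] H))
    (hFred : IsFredholm (U + 1)) :
    ∃ f : ℝ → (H →L[ℂ] H),
      ContDiffOn ℝ (⊤ : ℕ∞) f (Set.Icc 0 1) ∧
      (∀ t ∈ Set.Icc (0 : ℝ) 1, f t ∈ unitary (H →L[ℂ] H)) ∧
      (∀ t ∈ Set.Icc (0 : ℝ) 1, IsFredholm (f t + 1)) ∧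
      FiniteDimensional ℂ (LinearMap.range ((f 0 - 1 : H →L[ℂ] H) : H →ₗ[ℂ] H)) ∧
      f 1 = U ∧
      (∀ s ∈ Set.Icc (0 : ℝ) 1, ∀ t ∈ Set.Icc (0 : ℝ) 1,
        Module.finrank ℂ (LinearMap.ker ((f s + 1 : H →L[ℂ] H) : H →ₗ[ℂ] H)) =
          Module.finrank ℂ (LinearMap.ker ((f t + 1 : H →L[ℂ] H) : H →ₗ[ℂ] H))) := by
  obtain ⟨hker, hcl, -⟩ := hFred
  classical
  set K : Submodule ℂ H := LinearMap.ker ((U + 1 : H →L[ℂ] H) : H →ₗ[ℂ] H) with hKdef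
  haveI : FiniteDimensional ℂ K := hker
  haveI : CompleteSpace K := FiniteDimensional.complete ℂ _
  set P : H →L[ℂ] H := K.subtypeL ∘L K.orthogonalProjectionOnto with hPdef
  have hPapply : ∀ x, P x = ↑(K.orthogonalProjectionOnto x) := fun x => rfl
  have hPmem : ∀ x, P x ∈ K := fun x => (K.orthogonalProjectionOnto x).2
  have hPid : ∀ x ∈ K, P x = x := fun x hx => K.starProjection_eq_self_iff.2 hx
  have hP2 : P * P = P := by
    ext x
    exact hPid _ (hPmem x)
  have hPst : star P = P := by
    have : IsSelfAdjoint P := by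
      rw [ContinuousLinearMap.isSelfAdjoint_iff_isSymmetric]
      exact K.starProjection_isSymmetric
    exact this
  have hU1 : star U * U = 1 := (Unitary.mem_iff.mp hU).1
  have hU2 : U * star U = 1 := (Unitary.mem_iff.mp hU).2
  have hUx : ∀ x ∈ K, U x = -x := by
    intro x hx
    have h : (U + 1) x = 0 := hx
    rw [ContinuousLinearMap.add_apply, ContinuousLinearMap.one_apply] at h
    exact eq_neg_of_add_eq_zero_left h
  have hsUx : ∀ x ∈ K, star U x = -x := by
    intro x hx
    have h1 : star U (U x) = x := by
      rw [← ContinuousLinearMap.mul_apply, hU1, ContinuousLinearMap.one_apply]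
    rw [hUx x hx, map_neg] at h1
    linear_combination (norm := module) -h1
  have hUP : U * P = -P := by
    ext x
    rw [ContinuousLinearMap.mul_apply, ContinuousLinearMap.neg_apply]
    exact hUx _ (hPmem x)
  have hsUP : star U * P = -P := by
    ext x
    rw [ContinuousLinearMap.mul_apply, ContinuousLinearMap.neg_apply]
    exact hsUx _ (hPmem x)
  have hPU : P * U = -P := by
    have := congrArg star hsUP
    rwa [star_mul, star_star, hPst, star_neg, hPst] at this
  have hPsU : P * star U = -P := by
    have := congrArg star hUP
    rwa [star_mul, hPst, star_neg, hPst] at this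
  set W : H →L[ℂ] H := U + (2:ℝ) • P with hWdef
  have hWst : star W = star U + (2:ℝ) • P := by
    rw [hWdef, star_add, star_smul, hPst, star_trivial (2:ℝ)]
  have hWP : W * P = P := by
    rw [hWdef, add_mul, smul_mul_assoc, hUP, hP2]
    module
  have hPW : P * W = P := by
    rw [hWdef, mul_add, mul_smul_comm, hPU, hP2]
    module
  have hsWP : star W * P = P := by
    rw [hWst, add_mul, smul_mul_assoc, hsUP, hP2]
    module
  have hPsW : P * star W = P := by
    rw [hWst, mul_add, mul_smul_comm, hPsU, hP2]
    module
  have hsWW : star W * W = 1 := by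
    rw [hWst, hWdef]
    simp only [add_mul, mul_add, smul_mul_assoc, mul_smul_comm, hU1, hsUP, hPU, hP2, smul_smul]
    module
  have hWsW : W * star W = 1 := by
    rw [hWst, hWdef]
    simp only [add_mul, mul_add, smul_mul_assoc, mul_smul_comm, hU2, hUP, hPsU, hP2, smul_smul]
    module
  have hWunit : IsUnit W := isUnit_iff_exists.2 ⟨star W, hWsW, hsWW⟩
  have hWnorm : ‖W‖ ≤ 1 := by
    have h := CStarRing.norm_star_mul_self (x := W)
    rw [hsWW] at h
    have h1 : ‖(1 : H →L[ℂ] H)‖ ≤ 1 := ContinuousLinearMap.norm_id_le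
    nlinarith [norm_nonneg W]
  -- range of U + 1 is Kᗮ
  have hadj : ∀ (x b : H), (inner ℂ ((U + 1) x) b : ℂ) = inner ℂ x ((star U + 1) b) := by
    intro x b
    have h1 : star (U + 1) = star U + 1 := by rw [star_add, star_one]
    calc (inner ℂ ((U + 1) x) b : ℂ)
        = inner ℂ x (ContinuousLinearMap.adjoint (U + 1) b) := by
          rw [ContinuousLinearMap.adjoint_inner_right]
      _ = inner ℂ x ((star U + 1) b) := by
          rw [← ContinuousLinearMap.star_eq_adjoint, h1]
  have hrange_le : LinearMap.range ((U + 1 : H →L[ℂ] H) : H →ₗ[ℂ] H) ≤ Kᗮ := by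
    rintro _ ⟨x, rfl⟩
    rw [Submodule.mem_orthogonal']
    intro u hu
    rw [ContinuousLinearMap.coe_coe, hadj]
    have : (star U + 1) u = 0 := by
      rw [ContinuousLinearMap.add_apply, ContinuousLinearMap.one_apply, hsUx u hu]
      abel
    rw [this, inner_zero_right]
  have hker_adj : ∀ b : H, (∀ x, (inner ℂ ((U + 1) x) b : ℂ) = 0) → b ∈ K := by
    intro b hb
    have h0 : (star U + 1) b = 0 := by
      have h1 : (inner ℂ ((star U + 1) b) ((star U + 1) b) : ℂ) = 0 := by
        have := hb ((star U + 1) b)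
        rwa [hadj] at this
      exact inner_self_eq_zero.mp h1
    have h2 : star U b = -b := by
      rw [ContinuousLinearMap.add_apply, ContinuousLinearMap.one_apply] at h0
      exact eq_neg_of_add_eq_zero_left h0
    have h3 : U b = -b := by
      have h4 : U (star U b) = b := by
        rw [← ContinuousLinearMap.mul_apply, hU2, ContinuousLinearMap.one_apply]
      rw [h2, map_neg] at h4
      linear_combination (norm := module) -h4
    show (U + 1) b = 0
    rw [ContinuousLinearMap.add_apply, ContinuousLinearMap.one_apply, h3]
    abel
  have hrange : LinearMap.range ((U + 1 : H →L[ℂ] H) : H →ₗ[ℂ] H) = Kᗮ := by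
    refine le_antisymm hrange_le ?_
    intro z hz
    haveI : CompleteSpace (LinearMap.range ((U + 1 : H →L[ℂ] H) : H →ₗ[ℂ] H)) := hcl.completeSpace_coe
    obtain ⟨a, ha, b, hb, hzab⟩ :=
      Submodule.exists_add_mem_mem_orthogonal (K := LinearMap.range ((U + 1 : H →L[ℂ] H) : H →ₗ[ℂ] H)) z
    have hbK : b ∈ K := by
      apply hker_adj
      intro x
      exact (Submodule.mem_orthogonal _ b).mp hb _ ⟨x, rfl⟩
    have hbKo : b ∈ Kᗮ := by
      have haKo : a ∈ Kᗮ := hrange_le ha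
      have : b = z - a := by rw [hzab]; abel
      rw [this]
      exact Submodule.sub_mem _ hz haKo
    have hb0 : b = 0 := by
      have h := (Submodule.mem_orthogonal K b).mp hbKo b hbK
      exact inner_self_eq_zero.mp h
    rw [hzab, hb0, add_zero]
    exact ha
  -- V = 1 + W is invertible
  set V : H →L[ℂ] H := 1 + W with hVdef
  have hVapply : ∀ x, V x = (U + 1) x + (2:ℝ) • P x := by
    intro x
    rw [hVdef, hWdef]
    simp only [ContinuousLinearMap.add_apply, ContinuousLinearMap.one_apply,
      ContinuousLinearMap.smul_apply]
    abel
  have hU1P : ∀ x, (U + 1) (P x) = 0 := fun x => hPmem x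
  have hVinj : LinearMap.ker (V : H →ₗ[ℂ] H) = ⊥ := by
    rw [LinearMap.ker_eq_bot']
    intro x hx
    rw [ContinuousLinearMap.coe_coe, hVapply] at hx
    have h1 : (U + 1) x ∈ Kᗮ := hrange_le ⟨x, rfl⟩
    have h2 : (U + 1) x = -((2:ℝ) • P x) := eq_neg_of_add_eq_zero_left hx
    have h3 : (U + 1) x ∈ K := by
      rw [h2]
      exact K.neg_mem (K.smul_of_tower_mem _ (hPmem x))
    have h4 : (U + 1) x = 0 := by
      have := (Submodule.mem_orthogonal K _).mp h1 _ h3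
      exact inner_self_eq_zero.mp ((inner_eq_zero_symm).mp this)
    have h5 : P x = 0 := by
      rw [h4] at h2
      have h6 : (2:ℝ) • P x = (2:ℝ) • (0 : H) := by
        rw [smul_zero]
        exact neg_eq_zero.mp h2.symm
      exact smul_right_injective H (two_ne_zero (α := ℝ)) h6
    have h7 : x ∈ K := h4
    rw [← hPid x h7, h5]
  have hVsurj : LinearMap.range (V : H →ₗ[ℂ] H) = ⊤ := by
    rw [LinearMap.range_eq_top]
    intro y
    have hy : y - P y ∈ Kᗮ := K.sub_starProjection_mem_orthogonal y
    rw [← hrange] at hy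
    obtain ⟨x₀, hx₀⟩ := hy
    rw [ContinuousLinearMap.coe_coe] at hx₀
    refine ⟨x₀ - P x₀ + (2:ℝ)⁻¹ • P y, ?_⟩
    rw [ContinuousLinearMap.coe_coe, hVapply]
    have e1 : (U + 1) (x₀ - P x₀ + (2:ℝ)⁻¹ • P y) = y - P y := by
      rw [map_add, map_sub, ContinuousLinearMap.map_smul_of_tower, hU1P, hU1P, hx₀]
      simp
    have e2 : P (x₀ - P x₀ + (2:ℝ)⁻¹ • P y) = (2:ℝ)⁻¹ • P y := by
      rw [map_add, map_sub, ContinuousLinearMap.map_smul_of_tower]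
      rw [hPid _ (hPmem x₀), hPid _ (hPmem y)]
      abel
    rw [e1, e2, smul_smul]
    norm_num
  have hVunit : IsUnit V := by
    let e := ContinuousLinearEquiv.ofBijective V hVinj hVsurj
    refine isUnit_iff_exists.2 ⟨(e.symm : H →L[ℂ] H), ?_, ?_⟩
    · ext x
      show V (e.symm x) = x
      exact e.apply_symm_apply x
    · ext x
      show e.symm (V x) = x
      exact e.symm_apply_apply x
  -- the path
  set c : ℝ → (H →L[ℂ] H) := fun t => (1+t) • 1 + (1-t) • W with hcdef
  set d : ℝ → (H →L[ℂ] H) := fun t => (1-t) • 1 + (1+t) • W with hddef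
  have hc0V : c 0 = V := by
    rw [hcdef, hVdef]; norm_num
  have hd0V : d 0 = V := by
    rw [hddef, hVdef]; norm_num
  have hcunit : ∀ t ∈ Set.Icc (0:ℝ) 1, IsUnit (c t) := by
    rintro t ⟨ht0, ht1⟩
    rcases eq_or_lt_of_le ht0 with h0 | h0
    · rw [← h0, hc0V]; exact hVunit
    · have ha : (1+t) ≠ 0 := by positivity
      set μ : ℝ := (1-t)/(1+t) with hμdef
      have hμ1 : μ < 1 := by
        rw [hμdef, div_lt_one (by positivity)]; linarith
      have hnorm : ‖-(μ • W)‖ < 1 := by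
        rw [norm_neg, norm_smul, Real.norm_eq_abs, abs_of_nonneg (by apply div_nonneg <;> linarith)]
        calc μ * ‖W‖ ≤ μ * 1 := by
              apply mul_le_mul_of_nonneg_left hWnorm (by apply div_nonneg <;> linarith)
          _ < 1 := by rwa [mul_one]
      have hu : IsUnit ((1:H →L[ℂ] H) - -(μ • W)) := (Units.oneSub _ hnorm).isUnit
      have heq : c t = (1+t) • ((1:H →L[ℂ] H) - -(μ • W)) := by
        rw [sub_neg_eq_add, smul_add, smul_smul, hcdef]
        have : (1+t) * μ = 1 - t := by rw [hμdef]; field_simp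
        rw [this]
      rw [heq]
      exact isUnit_smul_real ha hu
  have hdunit : ∀ t ∈ Set.Icc (0:ℝ) 1, IsUnit (d t) := by
    rintro t ⟨ht0, ht1⟩
    rcases eq_or_lt_of_le ht0 with h0 | h0
    · rw [← h0, hd0V]; exact hVunit
    · have ha : (1+t) ≠ 0 := by positivity
      set μ : ℝ := (1-t)/(1+t) with hμdef
      have hμ1 : μ < 1 := by
        rw [hμdef, div_lt_one (by positivity)]; linarith
      have hnorm : ‖-(μ • star W)‖ < 1 := by
        rw [norm_neg, norm_smul, Real.norm_eq_abs, abs_of_nonneg (by apply div_nonneg <;> linarith), norm_star]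
        calc μ * ‖W‖ ≤ μ * 1 := by
              apply mul_le_mul_of_nonneg_left hWnorm (by apply div_nonneg <;> linarith)
          _ < 1 := by rwa [mul_one]
      have hu : IsUnit ((1:H →L[ℂ] H) - -(μ • star W)) := (Units.oneSub _ hnorm).isUnit
      have heq : d t = (1+t) • (W * ((1:H →L[ℂ] H) - -(μ • star W))) := by
        rw [sub_neg_eq_add, mul_add, mul_one, mul_smul_comm, hWsW, smul_add, smul_smul]
        have : (1+t) * μ = 1 - t := by rw [hμdef]; field_simp
        rw [this, hddef]
        module
      rw [heq]
      exact isUnit_smul_real ha (hWunit.mul hu)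
  set f : ℝ → (H →L[ℂ] H) := fun t => d t * Ring.inverse (c t) - (2:ℝ) • P with hfdef
  have key : ∀ t ∈ Set.Icc (0:ℝ) 1,
      star (f t) * f t = 1 ∧ f t * star (f t) = 1 := by
    intro t ht
    have hc' := hcunit t ht
    set Q : H →L[ℂ] H := Ring.inverse (c t) with hQdef
    have hft : f t = d t * Q - (2:ℝ) • P := by rw [hfdef]
    have hcQ : c t * Q = 1 := Ring.mul_inverse_cancel _ hc'
    have hQc : Q * c t = 1 := Ring.inverse_mul_cancel _ hc'
    have hPc : P * c t = (2:ℝ) • P := by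
      simp only [hcdef, mul_add, mul_smul_comm, mul_one, hPW]
      module
    have hcP : c t * P = (2:ℝ) • P := by
      simp only [hcdef, add_mul, smul_mul_assoc, one_mul, hWP]
      module
    have hcd : c t * d t = d t * c t := by
      simp only [hcdef, hddef, mul_add, add_mul, smul_mul_assoc, mul_smul_comm, smul_smul,
        one_mul, mul_one]
      module
    have hfc : f t * c t = d t - (4:ℝ) • P := by
      rw [hft, sub_mul, smul_mul_assoc, mul_assoc, hQc, mul_one, hPc, smul_smul]
      norm_num
    have hcf : c t * f t = d t - (4:ℝ) • P := by
      rw [hft, mul_sub, ← mul_assoc, hcd, mul_assoc, hcQ, mul_one, mul_smul_comm, hcP,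
        smul_smul]
      norm_num
    have hsc : star (c t) = (1+t) • 1 + (1-t) • star W := by
      simp only [hcdef, star_add, star_smul, star_one, star_trivial]
    have hsd : star (d t) = (1-t) • 1 + (1+t) • star W := by
      simp only [hddef, star_add, star_smul, star_one, star_trivial]
    have hstar1 : star (c t) * star (f t) = star (d t) - (4:ℝ) • P := by
      calc star (c t) * star (f t) = star (f t * c t) := (star_mul _ _).symm
        _ = star (d t - (4:ℝ) • P) := by rw [hfc]
        _ = star (d t) - (4:ℝ) • P := by
            rw [star_sub, star_smul, star_trivial ((4:ℝ)), hPst]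
    have hstar2 : star (f t) * star (c t) = star (d t) - (4:ℝ) • P := by
      calc star (f t) * star (c t) = star (c t * f t) := (star_mul _ _).symm
        _ = star (d t - (4:ℝ) • P) := by rw [hcf]
        _ = star (d t) - (4:ℝ) • P := by
            rw [star_sub, star_smul, star_trivial ((4:ℝ)), hPst]
    have E1 : (star (d t) - (4:ℝ) • P) * (d t - (4:ℝ) • P) = star (c t) * c t := by
      rw [hsd, hsc]
      simp only [hcdef, hddef, sub_mul, mul_sub, add_mul, mul_add, smul_mul_assoc,
        mul_smul_comm, smul_smul, one_mul, mul_one, hsWW, hsWP, hPW, hP2]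
      module
    have E2 : (d t - (4:ℝ) • P) * (star (d t) - (4:ℝ) • P) = c t * star (c t) := by
      rw [hsd, hsc]
      simp only [hcdef, hddef, sub_mul, mul_sub, add_mul, mul_add, smul_mul_assoc,
        mul_smul_comm, smul_smul, one_mul, mul_one, hWsW, hWP, hPsW, hP2]
      module
    constructor
    · have e2 : star (c t) * (star (f t) * f t * c t) = star (c t) * (1 * c t) := by
        rw [one_mul]
        calc star (c t) * (star (f t) * f t * c t)
            = (star (c t) * star (f t)) * (f t * c t) := by
              rw [mul_assoc (star (f t)) (f t) (c t), ← mul_assoc]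
          _ = (star (d t) - (4:ℝ) • P) * (d t - (4:ℝ) • P) := by rw [hstar1, hfc]
          _ = star (c t) * c t := E1
      exact cancel_right hc' (cancel_left hc'.star e2)
    · have e2 : c t * (f t * star (f t) * star (c t)) = c t * (1 * star (c t)) := by
        rw [one_mul]
        calc c t * (f t * star (f t) * star (c t))
            = (c t * f t) * (star (f t) * star (c t)) := by
              rw [mul_assoc (f t) (star (f t)) (star (c t)), ← mul_assoc]
          _ = (d t - (4:ℝ) • P) * (star (d t) - (4:ℝ) • P) := by rw [hcf, hstar2]
          _ = c t * star (c t) := E2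
      exact cancel_right hc'.star (cancel_left hc' e2)
  have hf1 : ∀ t ∈ Set.Icc (0:ℝ) 1,
      f t + 1 = (2:ℝ) • (V * Ring.inverse (c t)) - (2:ℝ) • P := by
    intro t ht
    have hc' := hcunit t ht
    have hcQ : c t * Ring.inverse (c t) = 1 := Ring.mul_inverse_cancel _ hc'
    have hdc : d t + c t = (2:ℝ) • V := by
      simp only [hcdef, hddef, hVdef, smul_add]
      module
    have h1 : f t + 1 = (d t + c t) * Ring.inverse (c t) - (2:ℝ) • P := by
      simp only [hfdef, add_mul]
      rw [← hcQ]
      abel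
    rw [h1, hdc, smul_mul_assoc]
  have hPV : P * V = (2:ℝ) • P := by
    simp only [hVdef, mul_add, mul_one, hPW]
    module
  have hkerEq : ∀ t ∈ Set.Icc (0:ℝ) 1, LinearMap.ker ((f t + 1 : H →L[ℂ] H) : H →ₗ[ℂ] H) = K := by
    intro t ht
    have hc' := hcunit t ht
    set Q : H →L[ℂ] H := Ring.inverse (c t) with hQdef
    have hcQ : c t * Q = 1 := Ring.mul_inverse_cancel _ hc'
    have hQc : Q * c t = 1 := Ring.inverse_mul_cancel _ hc'
    have hPc : P * c t = (2:ℝ) • P := by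
      simp only [hcdef, mul_add, mul_smul_comm, mul_one, hPW]
      module
    have hcP : c t * P = (2:ℝ) • P := by
      simp only [hcdef, add_mul, smul_mul_assoc, one_mul, hWP]
      module
    ext x
    constructor
    · intro hx
      have hx0 : (f t + 1) x = 0 := hx
      rw [hf1 t ht] at hx0
      have hx' : (2:ℝ) • (V (Q x)) - (2:ℝ) • (P x) = 0 := by
        simpa [ContinuousLinearMap.sub_apply, ContinuousLinearMap.smul_apply,
          ContinuousLinearMap.mul_apply] using hx0
      have h1 : V (Q x) = P x := by
        have h2 : (2:ℝ) • (V (Q x)) = (2:ℝ) • (P x) := by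
          linear_combination (norm := module) hx'
        exact smul_right_injective H (two_ne_zero (α := ℝ)) h2
      have hxy : x = c t (Q x) := by
        have h3 : c t (Q x) = x := by
          rw [← ContinuousLinearMap.mul_apply, hcQ, ContinuousLinearMap.one_apply]
        exact h3.symm
      have hPx : P x = (2:ℝ) • P (Q x) := by
        conv_lhs => rw [hxy]
        rw [← ContinuousLinearMap.mul_apply, hPc, ContinuousLinearMap.smul_apply]
      have hy : (U + 1) (Q x) = 0 := by
        have hVy : V (Q x) = (U + 1) (Q x) + (2:ℝ) • P (Q x) := hVapply _
        have h4 := h1.trans hPx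
        rw [hVy] at h4
        linear_combination (norm := module) h4
      have hyK : Q x ∈ K := hy
      have hx2 : x = (2:ℝ) • Q x := by
        have h3 : c t (Q x) = (2:ℝ) • Q x := by
          conv_lhs => rw [← hPid _ hyK]
          rw [← ContinuousLinearMap.mul_apply, hcP, ContinuousLinearMap.smul_apply,
            hPid _ hyK]
        exact hxy.trans h3
      rw [hx2]
      exact K.smul_of_tower_mem _ hyK
    · intro hxK
      have hPx : P x = x := hPid x hxK
      have h0 : (U + 1) x = 0 := hxK
      show (f t + 1) x = 0
      have hQx : Q x = (2:ℝ)⁻¹ • x := by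
        have h2 : c t x = (2:ℝ) • x := by
          conv_lhs => rw [← hPx]
          rw [← ContinuousLinearMap.mul_apply, hcP, ContinuousLinearMap.smul_apply, hPx]
        have h1 : c t ((2:ℝ)⁻¹ • x) = x := by
          rw [ContinuousLinearMap.map_smul_of_tower, h2, smul_smul]
          norm_num
        calc Q x = Q (c t ((2:ℝ)⁻¹ • x)) := by rw [h1]
          _ = (Q * c t) ((2:ℝ)⁻¹ • x) := rfl
          _ = (2:ℝ)⁻¹ • x := by rw [hQc, ContinuousLinearMap.one_apply]
      rw [hf1 t ht, ← hQdef]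
      simp only [ContinuousLinearMap.sub_apply, ContinuousLinearMap.smul_apply,
        ContinuousLinearMap.mul_apply, hQx]
      rw [ContinuousLinearMap.map_smul_of_tower, hVapply, h0, hPx]
      module
  have hrangeEq : ∀ t ∈ Set.Icc (0:ℝ) 1, LinearMap.range ((f t + 1 : H →L[ℂ] H) : H →ₗ[ℂ] H) = Kᗮ := by
    intro t ht
    have hc' := hcunit t ht
    set Q : H →L[ℂ] H := Ring.inverse (c t) with hQdef
    have hcQ : c t * Q = 1 := Ring.mul_inverse_cancel _ hc'
    have hQc : Q * c t = 1 := Ring.inverse_mul_cancel _ hc'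
    have hPc : P * c t = (2:ℝ) • P := by
      simp only [hcdef, mul_add, mul_smul_comm, mul_one, hPW]
      module
    have hPQ : P * Q = (2:ℝ)⁻¹ • P := by
      have h1 : P = (2:ℝ) • (P * Q) := by
        calc P = P * (c t * Q) := by rw [hcQ, mul_one]
          _ = (P * c t) * Q := by rw [mul_assoc]
          _ = ((2:ℝ) • P) * Q := by rw [hPc]
          _ = (2:ℝ) • (P * Q) := by rw [smul_mul_assoc]
      calc P * Q = (2:ℝ)⁻¹ • ((2:ℝ) • (P * Q)) := by rw [smul_smul]; norm_num
        _ = (2:ℝ)⁻¹ • P := by rw [← h1]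
    have hPVQ : P * (V * Q) = P := by
      calc P * (V * Q) = (P * V) * Q := by rw [mul_assoc]
        _ = ((2:ℝ) • P) * Q := by rw [hPV]
        _ = (2:ℝ) • (P * Q) := by rw [smul_mul_assoc]
        _ = (2:ℝ) • ((2:ℝ)⁻¹ • P) := by rw [hPQ]
        _ = P := by rw [smul_smul]; norm_num
    apply le_antisymm
    · rintro _ ⟨x, rfl⟩
      have hPf : P * (f t + 1) = 0 := by
        rw [hf1 t ht, mul_sub, mul_smul_comm, hPVQ, mul_smul_comm, hP2]
        simp
      have hP0 : P ((f t + 1) x) = 0 := by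
        rw [← ContinuousLinearMap.mul_apply, hPf, ContinuousLinearMap.zero_apply]
      have hsub := K.sub_starProjection_mem_orthogonal ((f t + 1) x)
      rw [Submodule.starProjection_apply, ← hPapply, hP0, sub_zero] at hsub
      exact hsub
    · intro y hy
      have hPy : P y = 0 := by
        have h := Submodule.orthogonalProjectionOnto_apply_of_mem_orthogonal hy
        rw [hPapply, h, Submodule.coe_zero]
      obtain ⟨Vu, hVu⟩ := hVunit
      set Rv : H →L[ℂ] H := ↑Vu⁻¹ with hRdef
      have hVR : V * Rv = 1 := by rw [← hVu]; exact Vu.mul_inv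
      have hRV : Rv * V = 1 := by rw [← hVu]; exact Vu.inv_mul
      have hPR : P * Rv = (2:ℝ)⁻¹ • P := by
        have h1 : P = (2:ℝ) • (P * Rv) := by
          calc P = (P * V) * Rv := by rw [mul_assoc, hVR, mul_one]
            _ = ((2:ℝ) • P) * Rv := by rw [hPV]
            _ = (2:ℝ) • (P * Rv) := by rw [smul_mul_assoc]
        calc P * Rv = (2:ℝ)⁻¹ • ((2:ℝ) • (P * Rv)) := by rw [smul_smul]; norm_num
          _ = (2:ℝ)⁻¹ • P := by rw [← h1]
      refine ⟨(2:ℝ)⁻¹ • (c t (Rv y)), ?_⟩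
      have hQ1 : Q (c t (Rv y)) = Rv y := by
        calc Q (c t (Rv y)) = (Q * c t) (Rv y) := rfl
          _ = Rv y := by rw [hQc, ContinuousLinearMap.one_apply]
      have hV1 : V (Rv y) = y := by
        calc V (Rv y) = (V * Rv) y := rfl
          _ = y := by rw [hVR, ContinuousLinearMap.one_apply]
      have hP1 : P (c t (Rv y)) = 0 := by
        calc P (c t (Rv y)) = (P * c t) (Rv y) := rfl
          _ = (2:ℝ) • P (Rv y) := by rw [hPc, ContinuousLinearMap.smul_apply]
          _ = (2:ℝ) • ((P * Rv) y) := rfl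
          _ = 0 := by rw [hPR]; simp [hPy]
      rw [hf1 t ht, ← hQdef]
      simp only [ContinuousLinearMap.coe_coe, ContinuousLinearMap.sub_apply, ContinuousLinearMap.smul_apply,
        ContinuousLinearMap.mul_apply]
      have e1 : Q ((2:ℝ)⁻¹ • c t (Rv y)) = (2:ℝ)⁻¹ • Rv y := by
        rw [ContinuousLinearMap.map_smul_of_tower, hQ1]
      have e3 : P ((2:ℝ)⁻¹ • c t (Rv y)) = 0 := by
        rw [ContinuousLinearMap.map_smul_of_tower, hP1, smul_zero]
      rw [e1, e3, ContinuousLinearMap.map_smul_of_tower, hV1, smul_zero, sub_zero, smul_smul]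
      norm_num
  have hcC : ContDiff ℝ (⊤ : WithTop ℕ∞) c := by
    rw [hcdef]
    exact ((contDiff_const.add contDiff_id).smul contDiff_const).add
      ((contDiff_const.sub contDiff_id).smul contDiff_const)
  have hdC : ContDiff ℝ (⊤ : WithTop ℕ∞) d := by
    rw [hddef]
    exact ((contDiff_const.sub contDiff_id).smul contDiff_const).add
      ((contDiff_const.add contDiff_id).smul contDiff_const)
  have hsmooth : ContDiffOn ℝ (⊤ : WithTop ℕ∞) f (Set.Icc 0 1) := by
    intro t ht
    apply ContDiffAt.contDiffWithinAt
    have h1 : ContDiffAt ℝ (⊤ : WithTop ℕ∞) Ring.inverse (c t) := by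
      have h2 := contDiffAt_ringInverse ℝ (n := (⊤ : WithTop ℕ∞)) (hcunit t ht).unit
      rwa [IsUnit.unit_spec] at h2
    have h3 : ContDiffAt ℝ (⊤ : WithTop ℕ∞) (fun s => Ring.inverse (c s)) t :=
      h1.comp t hcC.contDiffAt
    exact (hdC.contDiffAt.mul h3).sub contDiffAt_const
  have hf0 : f 0 = 1 - (2:ℝ) • P := by
    simp only [hfdef]
    rw [hd0V, hc0V, Ring.mul_inverse_cancel _ hVunit]
  have hfinrange : FiniteDimensional ℂ (LinearMap.range ((f 0 - 1 : H →L[ℂ] H) : H →ₗ[ℂ] H)) := by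
    have hle : LinearMap.range ((f 0 - 1 : H →L[ℂ] H) : H →ₗ[ℂ] H) ≤ K := by
      rintro _ ⟨x, rfl⟩
      have h : (f 0 - 1) x = -((2:ℝ) • P x) := by
        rw [hf0]
        simp [ContinuousLinearMap.sub_apply, ContinuousLinearMap.smul_apply,
          ContinuousLinearMap.one_apply]
      rw [ContinuousLinearMap.coe_coe, h]
      exact K.neg_mem (K.smul_of_tower_mem _ (hPmem x))
    exact Submodule.finiteDimensional_of_le hle
  have hf1U : f 1 = U := by
    have hc' := hcunit 1 (Set.mem_Icc.mpr ⟨zero_le_one, le_refl 1⟩)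
    have hc1 : c 1 = (2:ℝ) • 1 := by
      simp only [hcdef]
      module
    have hd1 : d 1 = (2:ℝ) • W := by
      simp only [hddef]
      module
    have hu : c 1 * ((2:ℝ)⁻¹ • 1) = 1 := by
      rw [hc1, smul_mul_assoc, one_mul, smul_smul]
      norm_num
    have hQ1 : Ring.inverse (c 1) = (2:ℝ)⁻¹ • 1 := by
      calc Ring.inverse (c 1) = Ring.inverse (c 1) * (c 1 * ((2:ℝ)⁻¹ • 1)) := by
            rw [hu, mul_one]
        _ = (Ring.inverse (c 1) * c 1) * ((2:ℝ)⁻¹ • 1) := by rw [mul_assoc]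
        _ = (2:ℝ)⁻¹ • 1 := by rw [Ring.inverse_mul_cancel _ hc', one_mul]
    have h2 : f 1 = W - (2:ℝ) • P := by
      simp only [hfdef, hQ1, hd1]
      rw [smul_mul_assoc, mul_smul_comm, mul_one, smul_smul]
      norm_num
    rw [h2, hWdef, add_sub_cancel_right]
  refine ⟨f, hsmooth.of_le le_top, ?_, ?_, hfinrange, hf1U, ?_⟩
  · intro t ht
    exact Unitary.mem_iff.mpr (key t ht)
  · intro t ht
    refine ⟨?_, ?_, ?_⟩
    · rw [hkerEq t ht]
      exact hker
    · rw [hrangeEq t ht]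
      exact Submodule.isClosed_orthogonal K
    · rw [hrangeEq t ht, Submodule.orthogonal_orthogonal]
      exact hker
  · intro s hs t ht
    rw [hkerEq s hs, hkerEq t ht]
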